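/- arXiv:1104.0281 — 8 statements merged into one kernel-verified Lean document; each statement's English description precedes it below -/
import Mathlib

section
/- Let (A,∘) be a finite-dimensional pre-Lie algebra over a field of characteristic zero and let r ∈ A⊗A be symmetric. Then r is a solution of the S-equation in (A,∘) if and only if the induced linear map r : A* → A (defined by ⟨r(u*), v*⟩ = ⟨r, u*⊗v*⟩) is an O-operator of (A,∘) associated to the module (L_∘* − R_∘*, −R_∘*, A*). -/
set_option maxSynthPendingDepth 3
set_option synthInstance.maxHeartbeats 400000
set_option maxHeartbeats 800000

open TensorProduct

/-- A pre-Lie algebra structure. -/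
def IsPreLie {K A : Type*} [Field K] [AddCommGroup A] [Module K A]
    (mul : A →ₗ[K] A →ₗ[K] A) : Prop :=
  ∀ x y z : A, mul (mul x y) z - mul x (mul y z) = mul (mul y x) z - mul y (mul x z)

/-- An O-operator of a pre-Lie algebra `(A,∘)` associated to a module `(l,r,V)`. -/
def IsOOperator {K A V : Type*} [Field K] [AddCommGroup A] [Module K A]
    [AddCommGroup V] [Module K V]
    (mul : A →ₗ[K] A →ₗ[K] A) (l r : A →ₗ[K] Module.End K V) (T : V →ₗ[K] A) : Prop :=
  ∀ u v : V, mul (T u) (T v) = T (l (T u) v + r (T v) u)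

/-- The dual map `ρ* : A → gl(V*)` defined by `⟨ρ*(x)v*, u⟩ = −⟨v*, ρ(x)u⟩`. -/
noncomputable def dualRep {K A V : Type*} [Field K] [AddCommGroup A] [Module K A]
    [AddCommGroup V] [Module K V]
    (ρ : A →ₗ[K] Module.End K V) : A →ₗ[K] Module.End K (Module.Dual K V) :=
  -((Module.Dual.transpose (R := K) (M := V) (M' := V)) ∘ₗ ρ)

/-- `r₁₂ ∘ r₁₃`: on pure tensors, `(a⊗b, c⊗d) ↦ (a∘c) ⊗ b ⊗ d`. -/
noncomputable def sTerm12_13 {K A : Type*} [Field K] [AddCommGroup A] [Module K A]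
    (mul : A →ₗ[K] A →ₗ[K] A) (r s : A ⊗[K] A) : A ⊗[K] (A ⊗[K] A) :=
  (TensorProduct.map (TensorProduct.lift mul) LinearMap.id)
    ((TensorProduct.tensorTensorTensorComm K A A A A) (r ⊗ₜ[K] s))

/-- `r₁₂ ∘ r₂₃`: on pure tensors, `(a⊗b, c⊗d) ↦ a ⊗ (b∘c) ⊗ d`. -/
noncomputable def sTerm12_23 {K A : Type*} [Field K] [AddCommGroup A] [Module K A]
    (mul : A →ₗ[K] A →ₗ[K] A) (r s : A ⊗[K] A) : A ⊗[K] (A ⊗[K] A) :=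
  (TensorProduct.map LinearMap.id
      ((TensorProduct.map (TensorProduct.lift mul) LinearMap.id) ∘ₗ
        (TensorProduct.assoc K A A A).symm.toLinearMap))
    ((TensorProduct.assoc K A A (A ⊗[K] A)) (r ⊗ₜ[K] s))

/-- `[r₁₃, r₂₃]`: on pure tensors, `(a⊗b, c⊗d) ↦ a ⊗ c ⊗ (b∘d − d∘b)`. -/
noncomputable def sTermBr13_23 {K A : Type*} [Field K] [AddCommGroup A] [Module K A]
    (mul : A →ₗ[K] A →ₗ[K] A) (r s : A ⊗[K] A) : A ⊗[K] (A ⊗[K] A) :=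
  (TensorProduct.map LinearMap.id
      (TensorProduct.map LinearMap.id (TensorProduct.lift (mul - mul.flip))))
    ((TensorProduct.assoc K A A (A ⊗[K] A))
      ((TensorProduct.tensorTensorTensorComm K A A A A) (r ⊗ₜ[K] s)))

/-- The S-equation in a pre-Lie algebra: `−r₁₂∘r₁₃ + r₁₂∘r₂₃ + [r₁₃,r₂₃] = 0`. -/
def IsSEquationSolution {K A : Type*} [Field K] [AddCommGroup A] [Module K A]
    (mul : A →ₗ[K] A →ₗ[K] A) (r : A ⊗[K] A) : Prop :=
  -sTerm12_13 mul r r + sTerm12_23 mul r r + sTermBr13_23 mul r r = 0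

/-- The linear map `A* → A` induced by `r ∈ A⊗A` via `⟨r(u*), v*⟩ = ⟨r, u*⊗v*⟩`;
on pure tensors, `a⊗b ↦ (u* ↦ u*(a) • b)`. -/
noncomputable def inducedMap {K A : Type*} [Field K] [AddCommGroup A] [Module K A]
    (r : A ⊗[K] A) : Module.Dual K A →ₗ[K] A :=
  dualTensorHom K (Module.Dual K A) A
    ((TensorProduct.map (Module.Dual.eval K A) LinearMap.id) r)

/-!
Write `T` for the induced map. Pairing the S-equation with `ξ ⊗ η ⊗ ζ` turns each of its three
terms into a value of a functional on a product `T _ ∘ T _`, and triple pairings separate the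
points of `A ⊗ A ⊗ A`. Symmetry of `r` makes `T` self-adjoint, `ζ (T ψ) = ψ (T ζ)`, so pairing the
O-operator identity for `(ξ, η)` with `ζ` gives exactly the S-equation paired with `ξ ⊗ ζ ⊗ η`.
-/

section Slicing

variable {R M N : Type*} [CommSemiring R] [AddCommMonoid M] [Module R M] [AddCommMonoid N]
  [Module R N]

def sliceLeft (f : Module.Dual R M) : M ⊗[R] N →ₗ[R] N :=
  TensorProduct.lid R N ∘ₗ f.rTensor N

@[simp] lemma sliceLeft_tmul (f : Module.Dual R M) (m : M) (n : N) :
    sliceLeft f (m ⊗ₜ[R] n) = f m • n := rfl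

lemma eq_zero_of_forall_sliceLeft_eq_zero [Module.Free R M] {t : M ⊗[R] N}
    (h : ∀ f : Module.Dual R M, sliceLeft f t = 0) : t = 0 := by
  classical
  let b := Module.Free.chooseBasis R M
  apply (TensorProduct.equivFinsuppOfBasisLeft b).injective
  ext i
  simpa [TensorProduct.equivFinsuppOfBasisLeft_apply, sliceLeft] using h (b.coord i)

end Slicing

section Field

variable {K A : Type*} [Field K] [AddCommGroup A] [Module K A]

lemma eq_zero_of_forall_triple_slice_eq_zero {t : A ⊗[K] (A ⊗[K] A)}
    (h : ∀ ξ η ζ : Module.Dual K A, ζ (sliceLeft η (sliceLeft ξ t)) = 0) : t = 0 :=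
  eq_zero_of_forall_sliceLeft_eq_zero fun ξ ↦ eq_zero_of_forall_sliceLeft_eq_zero fun η ↦
    (Module.forall_dual_apply_eq_zero_iff K _).mp (h ξ η)

@[simp] lemma inducedMap_zero : inducedMap (0 : A ⊗[K] A) = 0 := by
  simp [inducedMap]

@[simp] lemma inducedMap_add (r s : A ⊗[K] A) :
    inducedMap (r + s) = inducedMap r + inducedMap s := by
  simp [inducedMap]

@[simp] lemma inducedMap_tmul (a b : A) (ψ : Module.Dual K A) :
    inducedMap (a ⊗ₜ[K] b) ψ = ψ a • b := by
  simp [inducedMap]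

lemma apply_inducedMap_apply (r : A ⊗[K] A) (ψ ζ : Module.Dual K A) :
    ζ (inducedMap r ψ) = ψ (inducedMap (TensorProduct.comm K A A r) ζ) := by
  induction r using TensorProduct.induction_on with
  | zero => simp [inducedMap]
  | tmul a b => simp [mul_comm]
  | add x y hx hy => simp [hx, hy]

lemma dualRep_apply_apply {V : Type*} [AddCommGroup V] [Module K V]
    (ρ : A →ₗ[K] Module.End K V) (x : A) (f : Module.Dual K V) (v : V) :
    dualRep ρ x f v = -f (ρ x v) := rfl

section Slices

variable (mul : A →ₗ[K] A →ₗ[K] A) (ξ η ζ : Module.Dual K A)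

lemma slice_sTerm12_13 (r s : A ⊗[K] A) :
    ζ (sliceLeft η (sliceLeft ξ (sTerm12_13 mul r s))) =
      ξ (mul (inducedMap (TensorProduct.comm K A A r) η)
        (inducedMap (TensorProduct.comm K A A s) ζ)) := by
  induction r using TensorProduct.induction_on with
  | zero => simp [sTerm12_13]
  | add x y hx hy =>
    simp only [sTerm12_13, TensorProduct.add_tmul, map_add] at hx hy ⊢
    rw [hx, hy]
    simp only [inducedMap_add, LinearMap.add_apply, map_add]
  | tmul a b =>
    induction s using TensorProduct.induction_on with
    | zero => simp [sTerm12_13]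
    | add x y hx hy =>
      simp only [sTerm12_13, TensorProduct.tmul_add, map_add] at hx hy ⊢
      rw [hx, hy]
      simp only [inducedMap_add, LinearMap.add_apply, map_add]
    | tmul c d =>
      simp [sTerm12_13]
      ring

lemma slice_sTerm12_23 (r s : A ⊗[K] A) :
    ζ (sliceLeft η (sliceLeft ξ (sTerm12_23 mul r s))) =
      η (mul (inducedMap r ξ) (inducedMap (TensorProduct.comm K A A s) ζ)) := by
  induction r using TensorProduct.induction_on with
  | zero => simp [sTerm12_23]
  | add x y hx hy =>
    simp only [sTerm12_23, TensorProduct.add_tmul, map_add] at hx hy ⊢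
    rw [hx, hy]
    simp only [inducedMap_add, LinearMap.add_apply, map_add]
  | tmul a b =>
    induction s using TensorProduct.induction_on with
    | zero => simp [sTerm12_23]
    | add x y hx hy =>
      simp only [sTerm12_23, TensorProduct.tmul_add, map_add] at hx hy ⊢
      rw [hx, hy]
      simp only [inducedMap_add, LinearMap.add_apply, map_add]
    | tmul c d =>
      simp [sTerm12_23]
      ring

lemma slice_sTermBr13_23 (r s : A ⊗[K] A) :
    ζ (sliceLeft η (sliceLeft ξ (sTermBr13_23 mul r s))) =
      ζ (mul (inducedMap r ξ) (inducedMap s η)) - ζ (mul (inducedMap s η) (inducedMap r ξ)) := by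
  induction r using TensorProduct.induction_on with
  | zero => simp [sTermBr13_23]
  | add x y hx hy =>
    simp only [sTermBr13_23, TensorProduct.add_tmul, map_add] at hx hy ⊢
    rw [hx, hy]
    simp only [inducedMap_add, LinearMap.add_apply, map_add]
    ring
  | tmul a b =>
    induction s using TensorProduct.induction_on with
    | zero => simp [sTermBr13_23]
    | add x y hx hy =>
      simp only [sTermBr13_23, TensorProduct.tmul_add, map_add] at hx hy ⊢
      rw [hx, hy]
      simp only [inducedMap_add, LinearMap.add_apply, map_add]
      ring
    | tmul c d =>
      simp [sTermBr13_23]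
      ring

end Slices

lemma isSEquationSolution_iff_forall_dual (mul : A →ₗ[K] A →ₗ[K] A) {r : A ⊗[K] A}
    (hsymm : TensorProduct.comm K A A r = r) :
    IsSEquationSolution mul r ↔ ∀ ξ η ζ : Module.Dual K A,
      -ξ (mul (inducedMap r η) (inducedMap r ζ)) + η (mul (inducedMap r ξ) (inducedMap r ζ)) +
        (ζ (mul (inducedMap r ξ) (inducedMap r η)) - ζ (mul (inducedMap r η) (inducedMap r ξ)))
          = 0 := by
  have slice_eq (ξ η ζ : Module.Dual K A) :
      ζ (sliceLeft η (sliceLeft ξ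
        (-sTerm12_13 mul r r + sTerm12_23 mul r r + sTermBr13_23 mul r r))) =
      -ξ (mul (inducedMap r η) (inducedMap r ζ)) + η (mul (inducedMap r ξ) (inducedMap r ζ)) +
        (ζ (mul (inducedMap r ξ) (inducedMap r η)) - ζ (mul (inducedMap r η) (inducedMap r ξ))) := by
    simp only [map_add, map_neg, slice_sTerm12_13, slice_sTerm12_23, slice_sTermBr13_23, hsymm]
  rw [IsSEquationSolution]
  refine ⟨fun hS ξ η ζ ↦ ?_, fun h ↦ eq_zero_of_forall_triple_slice_eq_zero fun ξ η ζ ↦ ?_⟩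
  · rw [← slice_eq, hS, map_zero, map_zero, map_zero]
  · rw [slice_eq, h]

lemma isOOperator_dualRep_iff (mul : A →ₗ[K] A →ₗ[K] A) {T : Module.Dual K A →ₗ[K] A}
    (hT : ∀ ψ ζ : Module.Dual K A, ζ (T ψ) = ψ (T ζ)) :
    IsOOperator mul (dualRep mul - dualRep mul.flip) (-dualRep mul.flip) T ↔
      ∀ ξ η ζ : Module.Dual K A, ζ (mul (T ξ) (T η)) =
        η (mul (T ζ) (T ξ)) - η (mul (T ξ) (T ζ)) + ξ (mul (T ζ) (T η)) := by
  refine forall₂_congr fun ξ η ↦ ?_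
  rw [← sub_eq_zero, ← Module.forall_dual_apply_eq_zero_iff K]
  refine forall_congr' fun ζ ↦ ?_
  rw [map_sub, hT, sub_eq_zero]
  simp only [LinearMap.add_apply, LinearMap.sub_apply, LinearMap.neg_apply, dualRep_apply_apply,
    LinearMap.flip_apply]
  constructor <;> intro h <;> linear_combination h

end Field

theorem sEquation_iff_OOperator_general {K A : Type*} [Field K]
    [AddCommGroup A] [Module K A]
    (mul : A →ₗ[K] A →ₗ[K] A)
    (r : A ⊗[K] A) (hsymm : (TensorProduct.comm K A A) r = r) :
    IsSEquationSolution mul r ↔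
      IsOOperator mul (dualRep mul - dualRep mul.flip) (-(dualRep mul.flip))
        (inducedMap r) := by
  have hT (ψ ζ : Module.Dual K A) : ζ (inducedMap r ψ) = ψ (inducedMap r ζ) := by
    rw [apply_inducedMap_apply, hsymm]
  rw [isSEquationSolution_iff_forall_dual mul hsymm, isOOperator_dualRep_iff mul hT]
  exact ⟨fun H ξ η ζ ↦ by linear_combination H ξ ζ η, fun H ξ η ζ ↦ by linear_combination H ξ ζ η⟩

/-- For a finite-dimensional pre-Lie algebra `(A,∘)` over a field of
characteristic zero and a symmetric `r ∈ A⊗A`, `r` is a solution of the S-equation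
in `(A,∘)` iff the induced map `A* → A` is an O-operator of `(A,∘)` associated to
the module `(L_∘* − R_∘*, −R_∘*, A*)` (where `L_∘ = mul` and `R_∘ = mul.flip`). -/
theorem sEquation_iff_OOperator {K A : Type*} [Field K] [CharZero K]
    [AddCommGroup A] [Module K A] [FiniteDimensional K A]
    (mul : A →ₗ[K] A →ₗ[K] A) (h : IsPreLie mul)
    (r : A ⊗[K] A) (hsymm : (TensorProduct.comm K A A) r = r) :
    IsSEquationSolution mul r ↔
      IsOOperator mul (dualRep mul - dualRep mul.flip) (-(dualRep mul.flip))
        (inducedMap r) :=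
  sEquation_iff_OOperator_general mul r hsymm
end

section
/- Let (A,▷,◁) be an L-dendriform algebra over a field of characteristic zero. Then the binary operation x•y = x▷y + x◁y defines a pre-Lie algebra structure on A (the associated horizontal pre-Lie algebra). -/
/-- An L-dendriform algebra structure: two bilinear operations `tr` (`▷`) and `tl` (`◁`)
satisfying the two L-dendriform identities. -/
def IsLDendriform {K A : Type*} [Field K] [AddCommGroup A] [Module K A]
    (tr tl : A →ₗ[K] A →ₗ[K] A) : Prop :=
  (∀ x y z : A, tr x (tr y z) =
      tr (tr x y) z + tr (tl x y) z + tr y (tr x z) - tr (tl y x) z - tr (tr y x) z) ∧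
  (∀ x y z : A, tr x (tl y z) =
      tl (tr x y) z + tl y (tr x z) + tl y (tl x z) - tl (tl y x) z)

/-!
Write `x • y = x ▷ y + x ◁ y`. Expanding the associator of `•` with the second L-dendriform
identity leaves `(x • y) ▷ z - x ▷ (y ▷ z)` plus terms symmetric in `x` and `y`; the first
identity says exactly that this remaining part is symmetric in `x` and `y` as well.
-/

namespace IsLDendriform

variable {K A : Type*} [Field K] [AddCommGroup A] [Module K A] {tr tl : A →ₗ[K] A →ₗ[K] A}

theorem tr_add_tl_tr_sub_tr_tr_comm (h : IsLDendriform tr tl) (x y z : A) :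
    tr ((tr + tl) x y) z - tr x (tr y z) = tr ((tr + tl) y x) z - tr y (tr x z) := by
  simp only [LinearMap.add_apply, map_add]
  rw [h.1 x y z]
  abel

theorem add_associator_eq (h : IsLDendriform tr tl) (x y z : A) :
    (tr + tl) ((tr + tl) x y) z - (tr + tl) x ((tr + tl) y z) =
      (tr ((tr + tl) x y) z - tr x (tr y z)) +
        (tl (tl x y + tl y x) z - tl x ((tr + tl) y z) - tl y ((tr + tl) x z)) := by
  simp only [LinearMap.add_apply, map_add]
  rw [h.2 x y z]
  abel

end IsLDendriform

theorem horizontal_preLie_of_LDendriform_general {K A : Type*} [Field K]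
    [AddCommGroup A] [Module K A]
    (tr tl : A →ₗ[K] A →ₗ[K] A) (h : IsLDendriform tr tl) :
    IsPreLie (tr + tl) := by
  intro x y z
  rw [h.add_associator_eq, h.add_associator_eq, h.tr_add_tl_tr_sub_tr_tr_comm,
    add_comm (tl y x), sub_right_comm]

/-- For an L-dendriform algebra `(A,▷,◁)` over a field of characteristic
zero, the operation `x•y = x▷y + x◁y` (i.e. `tr + tl`) defines a pre-Lie algebra
structure on `A` (the associated horizontal pre-Lie algebra). -/
theorem horizontal_preLie_of_LDendriform {K A : Type*} [Field K] [CharZero K]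
    [AddCommGroup A] [Module K A]
    (tr tl : A →ₗ[K] A →ₗ[K] A) (h : IsLDendriform tr tl) :
    IsPreLie (tr + tl) :=
  horizontal_preLie_of_LDendriform_general tr tl h
end

section
/- Let (A,▷,◁) be an L-dendriform algebra over a field of characteristic zero. Then the binary operation x∘y = x▷y − y◁x defines a pre-Lie algebra structure on A (the associated vertical pre-Lie algebra). -/
theorem vertical_preLie_of_LDendriform_general {K A : Type*} [Field K]
    [AddCommGroup A] [Module K A]
    (tr tl : A →ₗ[K] A →ₗ[K] A) (h : IsLDendriform tr tl) :
    IsPreLie (tr - tl.flip) := by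
  obtain ⟨tr_tr, tr_tl⟩ := h
  intro x y z
  simp only [LinearMap.sub_apply, LinearMap.flip_apply, map_sub]
  rw [tr_tr x y z, tr_tl x z y, tr_tl y z x]
  abel

/-- For an L-dendriform algebra `(A,▷,◁)` over a field of characteristic
zero, the operation `x∘y = x▷y − y◁x` (i.e. `tr - tl.flip`) defines a pre-Lie algebra
structure on `A` (the associated vertical pre-Lie algebra). -/
theorem vertical_preLie_of_LDendriform {K A : Type*} [Field K] [CharZero K]
    [AddCommGroup A] [Module K A]
    (tr tl : A →ₗ[K] A →ₗ[K] A) (h : IsLDendriform tr tl) :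
    IsPreLie (tr - tl.flip) :=
  vertical_preLie_of_LDendriform_general tr tl h
end

section
/- Let A be a vector space over a field of characteristic zero with two bilinear operations ▷ and ◁. Then (A,▷,◁) is an L-dendriform algebra if and only if the operation x•y = x▷y + x◁y makes (A,•) a pre-Lie algebra and (L_▷, R_◁, A) is a module of (A,•), where L_▷(x)y = x▷y and R_◁(y)x = x◁y. -/
/-- A module `(l,r,V)` of a pre-Lie algebra `(A,∘)`. -/
def IsPreLieModule {K A V : Type*} [Field K] [AddCommGroup A] [Module K A]
    [AddCommGroup V] [Module K V]
    (mul : A →ₗ[K] A →ₗ[K] A) (l r : A →ₗ[K] Module.End K V) : Prop :=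
  (∀ x y : A, l x * l y - l (mul x y) = l y * l x - l (mul y x)) ∧
  (∀ x y : A, l x * r y - r y * l x = r (mul x y) - r y * r x)

/-! Evaluated at a third element, the two module axioms for `(L_▷, R_◁, A)` are exactly the two
L-dendriform identities, and the pre-Lie identity for `•` is a linear combination of these. -/

section

variable {K A : Type*} [Field K] [AddCommGroup A] [Module K A]

namespace IsLDendriform

theorem isPreLie_add {tr tl : A →ₗ[K] A →ₗ[K] A} (h : IsLDendriform tr tl) :
    IsPreLie (tr + tl) := by
  obtain ⟨h₁, h₂⟩ := h
  intro x y z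
  simp only [LinearMap.add_apply, map_add]
  linear_combination (norm := abel) h₂ y x z - h₂ x y z - h₁ x y z

end IsLDendriform

theorem left_commutator_eq_iff (tr tl : A →ₗ[K] A →ₗ[K] A) (x y : A) :
    tr x * tr y - tr ((tr + tl) x y) = tr y * tr x - tr ((tr + tl) y x) ↔
      ∀ z, tr x (tr y z) =
        tr (tr x y) z + tr (tl x y) z + tr y (tr x z) - tr (tl y x) z - tr (tr y x) z := by
  rw [LinearMap.ext_iff]
  refine forall_congr' fun z => ?_
  simp only [Module.End.mul_apply, LinearMap.sub_apply, LinearMap.add_apply, map_add]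
  constructor <;> intro h <;> linear_combination (norm := abel) h

theorem left_right_commutator_eq_iff (tr tl : A →ₗ[K] A →ₗ[K] A) (x z : A) :
    tr x * tl.flip z - tl.flip z * tr x = tl.flip ((tr + tl) x z) - tl.flip z * tl.flip x ↔
      ∀ y, tr x (tl y z) = tl (tr x y) z + tl y (tr x z) + tl y (tl x z) - tl (tl y x) z := by
  rw [LinearMap.ext_iff]
  refine forall_congr' fun y => ?_
  simp only [Module.End.mul_apply, LinearMap.sub_apply, LinearMap.add_apply, map_add,
    LinearMap.flip_apply]
  constructor <;> intro h <;> linear_combination (norm := abel) h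

theorem isPreLieModule_iff_isLDendriform (tr tl : A →ₗ[K] A →ₗ[K] A) :
    IsPreLieModule (tr + tl) tr tl.flip ↔ IsLDendriform tr tl := by
  refine and_congr ?_ ?_
  · simp only [left_commutator_eq_iff]
  · simp only [left_right_commutator_eq_iff]
    exact forall_congr' fun x => forall_comm

end

theorem isLDendriform_iff_horizontal_module_general {K A : Type*} [Field K]
    [AddCommGroup A] [Module K A]
    (tr tl : A →ₗ[K] A →ₗ[K] A) :
    IsLDendriform tr tl ↔
      (IsPreLie (tr + tl) ∧ IsPreLieModule (tr + tl) tr tl.flip) := by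
  rw [isPreLieModule_iff_isLDendriform]
  exact ⟨fun h => ⟨h.isPreLie_add, h⟩, And.right⟩

/-- `(A,▷,◁)` is L-dendriform iff `x•y = x▷y + x◁y` is pre-Lie and
`(L_▷, R_◁, A)` is a module of `(A,•)`, where `L_▷(x)y = x▷y` (i.e. `tr`) and
`R_◁(y)x = x◁y` (i.e. `tl.flip`). -/
theorem isLDendriform_iff_horizontal_module {K A : Type*} [Field K] [CharZero K]
    [AddCommGroup A] [Module K A]
    (tr tl : A →ₗ[K] A →ₗ[K] A) :
    IsLDendriform tr tl ↔
      (IsPreLie (tr + tl) ∧ IsPreLieModule (tr + tl) tr tl.flip) :=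
  isLDendriform_iff_horizontal_module_general tr tl
end

section
/- Let A be a vector space over a field of characteristic zero with two bilinear operations ▷ and ◁. Then (A,▷,◁) is an L-dendriform algebra if and only if the operation x∘y = x▷y − y◁x makes (A,∘) a pre-Lie algebra and (L_▷, −L_◁, A) is a module of (A,∘), where L_▷(x)y = x▷y and L_◁(x)y = x◁y. -/
section Identities

variable {K A : Type*} [CommRing K] [AddCommGroup A] [Module K A] (tr tl : A →ₗ[K] A →ₗ[K] A)

theorem ldendriform_first_iff_left_module :
    (∀ x y z : A, tr x (tr y z) =
      tr (tr x y) z + tr (tl x y) z + tr y (tr x z) - tr (tl y x) z - tr (tr y x) z) ↔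
    ∀ x y : A, tr x * tr y - tr ((tr - tl.flip) x y) = tr y * tr x - tr ((tr - tl.flip) y x) := by
  refine forall₂_congr fun x y => ?_
  simp only [LinearMap.ext_iff, LinearMap.sub_apply, Module.End.mul_apply, LinearMap.flip_apply,
    map_sub]
  refine forall_congr' fun z => ?_
  constructor <;> intro h <;> linear_combination (norm := abel) h

theorem ldendriform_second_iff_right_module :
    (∀ x y z : A, tr x (tl y z) =
      tl (tr x y) z + tl y (tr x z) + tl y (tl x z) - tl (tl y x) z) ↔
    ∀ x y : A, tr x * (-tl) y - (-tl) y * tr x =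
      (-tl) ((tr - tl.flip) x y) - (-tl) y * (-tl) x := by
  refine forall₂_congr fun x y => ?_
  simp only [LinearMap.ext_iff, LinearMap.sub_apply, Module.End.mul_apply, LinearMap.flip_apply,
    LinearMap.neg_apply, map_sub, map_neg]
  refine forall_congr' fun z => ?_
  constructor <;> intro h <;> linear_combination (norm := abel) -h

end Identities

theorem IsLDendriform.isPreLie {K A : Type*} [Field K] [AddCommGroup A] [Module K A]
    {tr tl : A →ₗ[K] A →ₗ[K] A} (h : IsLDendriform tr tl) : IsPreLie (tr - tl.flip) := by
  obtain ⟨h₁, h₂⟩ := h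
  intro x y z
  simp only [LinearMap.sub_apply, LinearMap.flip_apply, map_sub]
  rw [h₁ x y z, h₁ y x z, h₂ x z y, h₂ y z x]
  abel

theorem isLDendriform_iff_vertical_module_general {K A : Type*} [Field K]
    [AddCommGroup A] [Module K A]
    (tr tl : A →ₗ[K] A →ₗ[K] A) :
    IsLDendriform tr tl ↔
      (IsPreLie (tr - tl.flip) ∧ IsPreLieModule (tr - tl.flip) tr (-tl)) := by
  rw [IsPreLieModule, ← ldendriform_first_iff_left_module, ← ldendriform_second_iff_right_module]
  exact ⟨fun h => ⟨h.isPreLie, h⟩, And.right⟩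

/-- `(A,▷,◁)` is L-dendriform iff `x∘y = x▷y − y◁x` (i.e. `tr - tl.flip`)
is pre-Lie and `(L_▷, −L_◁, A)` is a module of `(A,∘)`, where `L_▷ = tr` and
`L_◁ = tl`. -/
theorem isLDendriform_iff_vertical_module {K A : Type*} [Field K] [CharZero K]
    [AddCommGroup A] [Module K A]
    (tr tl : A →ₗ[K] A →ₗ[K] A) :
    IsLDendriform tr tl ↔
      (IsPreLie (tr - tl.flip) ∧ IsPreLieModule (tr - tl.flip) tr (-tl)) :=
  isLDendriform_iff_vertical_module_general tr tl
end

section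
/- Let (A,∘) be a pre-Lie algebra over a field of characteristic zero, (l,r,V) a module, and T : V → A an O-operator associated to (l,r,V). Then the operations u▷v = l(T(u))v and u◁v = −r(T(u))v define an L-dendriform algebra structure on V, and T is a homomorphism of pre-Lie algebras from the associated vertical pre-Lie algebra (V,∗), u∗v = u▷v − v◁u, to (A,∘), i.e., T(u∗v) = T(u)∘T(v) for all u,v ∈ V. -/
def verticalMul {K A : Type*} [Field K] [AddCommGroup A] [Module K A]
    (tr tl : A →ₗ[K] A →ₗ[K] A) : A →ₗ[K] A →ₗ[K] A :=
  tr - tl.flip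

@[simp]
theorem verticalMul_apply {K A : Type*} [Field K] [AddCommGroup A] [Module K A]
    (tr tl : A →ₗ[K] A →ₗ[K] A) (x y : A) :
    verticalMul tr tl x y = tr x y - tl y x :=
  rfl

theorem IsLDendriform.of_isPreLieModule {K A : Type*} [Field K] [AddCommGroup A] [Module K A]
    {tr tl : A →ₗ[K] A →ₗ[K] A} (h : IsPreLieModule (verticalMul tr tl) tr (-tl)) :
    IsLDendriform tr tl := by
  obtain ⟨hl, hr⟩ := h
  refine ⟨fun x y z => ?_, fun x y z => ?_⟩
  · have e := LinearMap.congr_fun (hl x y) z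
    simp only [LinearMap.sub_apply, Module.End.mul_apply, verticalMul_apply, map_sub] at e
    linear_combination (norm := abel) e
  · have e := LinearMap.congr_fun (hr x y) z
    simp only [LinearMap.sub_apply, LinearMap.neg_apply, Module.End.mul_apply,
      verticalMul_apply, map_sub, map_neg, neg_neg] at e
    linear_combination (norm := abel) -e

theorem IsPreLieModule.comp {K A B V : Type*} [Field K] [AddCommGroup A] [Module K A]
    [AddCommGroup B] [Module K B] [AddCommGroup V] [Module K V]
    {mulA : A →ₗ[K] A →ₗ[K] A} {mulB : B →ₗ[K] B →ₗ[K] B} {l r : A →ₗ[K] Module.End K V}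
    (h : IsPreLieModule mulA l r) (f : B →ₗ[K] A)
    (hf : ∀ x y, f (mulB x y) = mulA (f x) (f y)) :
    IsPreLieModule mulB (l ∘ₗ f) (r ∘ₗ f) := by
  obtain ⟨hl, hr⟩ := h
  exact ⟨fun x y => by simpa only [LinearMap.comp_apply, hf] using hl (f x) (f y),
    fun x y => by simpa only [LinearMap.comp_apply, hf] using hr (f x) (f y)⟩

theorem IsOOperator.map_verticalMul {K A V : Type*} [Field K] [AddCommGroup A] [Module K A]
    [AddCommGroup V] [Module K V]
    {mul : A →ₗ[K] A →ₗ[K] A} {l r : A →ₗ[K] Module.End K V} {T : V →ₗ[K] A}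
    (hT : IsOOperator mul l r T) (u v : V) :
    T (verticalMul (l ∘ₗ T) (-(r ∘ₗ T)) u v) = mul (T u) (T v) := by
  simpa only [verticalMul_apply, LinearMap.comp_apply, LinearMap.neg_apply, sub_neg_eq_add]
    using (hT u v).symm

theorem LDendriform_of_OOperator_general {K A V : Type*} [Field K]
    [AddCommGroup A] [Module K A] [AddCommGroup V] [Module K V]
    (mul : A →ₗ[K] A →ₗ[K] A)
    (l r : A →ₗ[K] Module.End K V) (hmod : IsPreLieModule mul l r)
    (T : V →ₗ[K] A) (hT : IsOOperator mul l r T) :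
    IsLDendriform (l ∘ₗ T) (-(r ∘ₗ T)) ∧
    (∀ u v : V, T ((l ∘ₗ T) u v - (-(r ∘ₗ T)) v u) = mul (T u) (T v)) := by
  have hmul := hT.map_verticalMul
  refine ⟨IsLDendriform.of_isPreLieModule ?_, hmul⟩
  rw [neg_neg]
  exact hmod.comp T hmul

/-- If `T` is an O-operator of a pre-Lie algebra `(A,∘)` associated to a
module `(l,r,V)`, then `u▷v = l(T(u))v` and `u◁v = −r(T(u))v` (i.e. `l ∘ₗ T` and
`-(r ∘ₗ T)`) define an L-dendriform algebra structure on `V`, and `T` is a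
homomorphism from the associated vertical pre-Lie algebra `(V,∗)`, `u∗v = u▷v − v◁u`,
to `(A,∘)`. -/
theorem LDendriform_of_OOperator {K A V : Type*} [Field K] [CharZero K]
    [AddCommGroup A] [Module K A] [AddCommGroup V] [Module K V]
    (mul : A →ₗ[K] A →ₗ[K] A) (hA : IsPreLie mul)
    (l r : A →ₗ[K] Module.End K V) (hmod : IsPreLieModule mul l r)
    (T : V →ₗ[K] A) (hT : IsOOperator mul l r T) :
    IsLDendriform (l ∘ₗ T) (-(r ∘ₗ T)) ∧
    (∀ u v : V, T ((l ∘ₗ T) u v - (-(r ∘ₗ T)) v u) = mul (T u) (T v)) :=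
  LDendriform_of_OOperator_general mul l r hmod T hT
end

section
/- Let (A,∘) be a pre-Lie algebra over a field of characteristic zero and R : A → A a Rota-Baxter operator of weight 0, i.e., R(x)∘R(y) = R(R(x)∘y + x∘R(y)) for all x,y ∈ A. Then the operations x▷y = R(x)∘y and x◁y = −y∘R(x) define an L-dendriform algebra structure on A. -/
/-!
In terms of `x ▷ y = R(x)∘y` and `x ◁ y = -y∘R(x)` the weight-zero Rota–Baxter identity reads
`R(x)∘R(y) = R(x ▷ y - y ◁ x)`. The two L-dendriform axioms are then the pre-Lie identity
for the triples `(R x, R y, z)` and `(R x, z, R y)`, with every product `R(·)∘R(·)` rewritten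
in this way.
-/

def IsRotaBaxterWeightZero {K A : Type*} [CommSemiring K] [AddCommMonoid A] [Module K A]
    (mul : A →ₗ[K] A →ₗ[K] A) (R : A →ₗ[K] A) : Prop :=
  ∀ x y : A, mul (R x) (R y) = R (mul (R x) y + mul x (R y))

section

variable {K A : Type*} [Field K] [AddCommGroup A] [Module K A]
  {mul : A →ₗ[K] A →ₗ[K] A} {R : A →ₗ[K] A}

local notation "tr" => (mul ∘ₗ R : A →ₗ[K] A →ₗ[K] A)
local notation "tl" => (-(mul.flip ∘ₗ R) : A →ₗ[K] A →ₗ[K] A)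

theorem IsPreLie.rotaBaxter_ldendriform_left (h : IsPreLie mul) (hR : IsRotaBaxterWeightZero mul R)
    (x y z : A) :
    tr x (tr y z) =
      tr (tr x y) z + tr (tl x y) z + tr y (tr x z) - tr (tl y x) z - tr (tr y x) z := by
  have hxy := congr(mul $(hR x y) z)
  have hyx := congr(mul $(hR y x) z)
  simp only [LinearMap.comp_apply, LinearMap.neg_apply, LinearMap.flip_apply, map_add,
    LinearMap.add_apply, map_neg] at hxy hyx ⊢
  linear_combination (norm := abel) -h (R x) (R y) z + hxy - hyx

theorem IsPreLie.rotaBaxter_ldendriform_right (h : IsPreLie mul) (hR : IsRotaBaxterWeightZero mul R)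
    (x y z : A) :
    tr x (tl y z) = tl (tr x y) z + tl y (tr x z) + tl y (tl x z) - tl (tl y x) z := by
  have hxy := congr(mul z $(hR x y))
  simp only [LinearMap.comp_apply, LinearMap.neg_apply, LinearMap.flip_apply, map_add,
    map_neg] at hxy ⊢
  linear_combination (norm := abel) h (R x) z (R y) - hxy

end

theorem LDendriform_of_RotaBaxter_general {K A : Type*} [Field K]
    [AddCommGroup A] [Module K A]
    (mul : A →ₗ[K] A →ₗ[K] A) (h : IsPreLie mul)
    (R : A →ₗ[K] A)
    (hR : ∀ x y : A, mul (R x) (R y) = R (mul (R x) y + mul x (R y))) :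
    IsLDendriform (mul ∘ₗ R) (-(mul.flip ∘ₗ R)) :=
  ⟨IsPreLie.rotaBaxter_ldendriform_left h hR, IsPreLie.rotaBaxter_ldendriform_right h hR⟩

/-- If `R` is a Rota-Baxter operator of weight 0 on a pre-Lie algebra
`(A,∘)` over a field of characteristic zero, then `x▷y = R(x)∘y` and `x◁y = −y∘R(x)`
(i.e. `mul ∘ₗ R` and `-(mul.flip ∘ₗ R)`) define an L-dendriform algebra structure
on `A`. -/
theorem LDendriform_of_RotaBaxter {K A : Type*} [Field K] [CharZero K]
    [AddCommGroup A] [Module K A]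
    (mul : A →ₗ[K] A →ₗ[K] A) (h : IsPreLie mul)
    (R : A →ₗ[K] A)
    (hR : ∀ x y : A, mul (R x) (R y) = R (mul (R x) y + mul x (R y))) :
    IsLDendriform (mul ∘ₗ R) (-(mul.flip ∘ₗ R)) :=
  LDendriform_of_RotaBaxter_general mul h R hR
end

section
/- Let (A,∘) be a finite-dimensional pre-Lie algebra over a field of characteristic zero with a nondegenerate symmetric bilinear form B which is a 2-cocycle of (A,∘), i.e., B(x∘y, z) − B(x, y∘z) = B(y∘x, z) − B(y, x∘z) for all x,y,z ∈ A. Then the bilinear operations ▷ and ◁ determined by B(x▷y, z) = −B(y, [x,z]) and B(x◁y, z) = −B(y, z∘x) for all x,y,z ∈ A (where [x,z] = x∘z − z∘x) define an L-dendriform algebra structure on A which is compatible with (A,∘), i.e., x▷y − y◁x = x∘y for all x,y ∈ A. -/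
namespace LDendriform

variable {K A : Type*} [Field K] [AddCommGroup A] [Module K A]
  {mul tr tl : A →ₗ[K] A →ₗ[K] A} {B : A →ₗ[K] A →ₗ[K] K}

theorem eq_of_forall_apply_eq (hnd : B.SeparatingLeft) {u v : A}
    (huv : ∀ w, B u w = B v w) : u = v :=
  LinearMap.ker_eq_bot.mp (LinearMap.separatingLeft_iff_ker_eq_bot.mp hnd) (LinearMap.ext huv)

theorem _root_.IsPreLie.apply_associator_swap (h : IsPreLie mul) (u a b c : A) :
    B u (mul (mul a b) c) - B u (mul a (mul b c)) =
      B u (mul (mul b a) c) - B u (mul b (mul a c)) := by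
  simpa only [map_sub] using congrArg (B u) (h a b c)

theorem apply_tr_eq (htr : ∀ x y z, B (tr x y) z = -(B y (mul x z - mul z x))) (x y z : A) :
    B (tr x y) z = B y (mul z x) - B y (mul x z) := by
  rw [htr, map_sub]
  ring

theorem tr_sub_tl_eq_mul (hnd : B.SeparatingLeft) (hsymm : ∀ x y, B x y = B y x)
    (hcocycle : ∀ x y z, B (mul x y) z - B x (mul y z) = B (mul y x) z - B y (mul x z))
    (htr : ∀ x y z, B (tr x y) z = -(B y (mul x z - mul z x)))
    (htl : ∀ x y z, B (tl x y) z = -(B y (mul z x))) (x y : A) :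
    tr x y - tl y x = mul x y := by
  refine eq_of_forall_apply_eq hnd fun w => ?_
  simp only [map_sub, LinearMap.sub_apply, apply_tr_eq htr, htl]
  linear_combination -(hcocycle x y w) - hcocycle y w x - hsymm x (mul y w)
    - hsymm (mul y x) w - hsymm (mul w y) x

theorem tr_tr_eq (h : IsPreLie mul) (hnd : B.SeparatingLeft)
    (htr : ∀ x y z, B (tr x y) z = -(B y (mul x z - mul z x)))
    (hcomp : ∀ x y, tr x y - tl y x = mul x y) (x y z : A) :
    tr x (tr y z) =
      tr (tr x y) z + tr (tl x y) z + tr y (tr x z) - tr (tl y x) z - tr (tr y x) z := by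
  refine eq_of_forall_apply_eq hnd fun w => ?_
  simp only [map_add, map_sub, LinearMap.add_apply, LinearMap.sub_apply, apply_tr_eq htr]
  rw [sub_eq_iff_eq_add.mp (hcomp x y), sub_eq_iff_eq_add.mp (hcomp y x)]
  simp only [map_add, LinearMap.add_apply]
  linear_combination h.apply_associator_swap z w x y - h.apply_associator_swap z w y x
    + h.apply_associator_swap z x y w

theorem tr_tl_eq (h : IsPreLie mul) (hnd : B.SeparatingLeft)
    (htr : ∀ x y z, B (tr x y) z = -(B y (mul x z - mul z x)))
    (htl : ∀ x y z, B (tl x y) z = -(B y (mul z x)))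
    (hcomp : ∀ x y, tr x y - tl y x = mul x y) (x y z : A) :
    tr x (tl y z) = tl (tr x y) z + tl y (tr x z) + tl y (tl x z) - tl (tl y x) z := by
  refine eq_of_forall_apply_eq hnd fun w => ?_
  simp only [map_add, map_sub, LinearMap.add_apply, LinearMap.sub_apply, apply_tr_eq htr, htl]
  rw [sub_eq_iff_eq_add.mp (hcomp x y)]
  simp only [map_add]
  linear_combination -h.apply_associator_swap z w x y

end LDendriform

theorem LDendriform_of_pseudoHessian_general {K A : Type*} [Field K]
    [AddCommGroup A] [Module K A]
    (mul : A →ₗ[K] A →ₗ[K] A) (h : IsPreLie mul)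
    (B : A →ₗ[K] A →ₗ[K] K)
    (hnd : ∀ x : A, (∀ y : A, B x y = 0) → x = 0)
    (hsymm : ∀ x y : A, B x y = B y x)
    (hcocycle : ∀ x y z : A,
      B (mul x y) z - B x (mul y z) = B (mul y x) z - B y (mul x z))
    (tr tl : A →ₗ[K] A →ₗ[K] A)
    (htr : ∀ x y z : A, B (tr x y) z = -(B y (mul x z - mul z x)))
    (htl : ∀ x y z : A, B (tl x y) z = -(B y (mul z x))) :
    IsLDendriform tr tl ∧ (∀ x y : A, tr x y - tl y x = mul x y) := by
  have hcomp := LDendriform.tr_sub_tl_eq_mul hnd hsymm hcocycle htr htl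
  exact ⟨⟨LDendriform.tr_tr_eq h hnd htr hcomp, LDendriform.tr_tl_eq h hnd htr htl hcomp⟩,
    hcomp⟩

/-- Let `(A,∘)` be a finite-dimensional pre-Lie algebra over a field of
characteristic zero with a nondegenerate symmetric 2-cocycle `B`. Then the bilinear
operations `▷`, `◁` determined by `B(x▷y, z) = −B(y, [x,z])` and
`B(x◁y, z) = −B(y, z∘x)` (where `[x,z] = x∘z − z∘x`) define an L-dendriform algebra
structure on `A` compatible with `(A,∘)`, i.e. `x▷y − y◁x = x∘y`. -/
theorem LDendriform_of_pseudoHessian {K A : Type*} [Field K] [CharZero K]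
    [AddCommGroup A] [Module K A] [FiniteDimensional K A]
    (mul : A →ₗ[K] A →ₗ[K] A) (h : IsPreLie mul)
    (B : A →ₗ[K] A →ₗ[K] K)
    (hnd : ∀ x : A, (∀ y : A, B x y = 0) → x = 0)
    (hsymm : ∀ x y : A, B x y = B y x)
    (hcocycle : ∀ x y z : A,
      B (mul x y) z - B x (mul y z) = B (mul y x) z - B y (mul x z))
    (tr tl : A →ₗ[K] A →ₗ[K] A)
    (htr : ∀ x y z : A, B (tr x y) z = -(B y (mul x z - mul z x)))
    (htl : ∀ x y z : A, B (tl x y) z = -(B y (mul z x))) :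
    IsLDendriform tr tl ∧ (∀ x y : A, tr x y - tl y x = mul x y) :=
  LDendriform_of_pseudoHessian_general mul h B hnd hsymm hcocycle tr tl htr htl
end
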